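/- Let C, D be monoidal categories, E : C → D an op-monoidal functor, and M a (C,D)-biactegory. If (M, β^M) is an object of the lax E-center Z^w_E(M) and (X, β^X) an object of the lax center Z^w(D), then M ◁ X equipped with β^{M◁X}_W = (id_M ◁ β^X_{E(W)}) ∘ (β^M_W ◁ id_X) is again an object of Z^w_E(M); i.e., β^{M◁X} satisfies the heptagon half-braid condition (id ◁ ψ_{V,W}) ∘ β^{M◁X}_{V⊗W} = (β^{M◁X}_V ◁ id_{E(W)}) ∘ (id_V ▷ β^{M◁X}_W) for all V, W ∈ C. -/

import Mathlib

open CategoryTheory CategoryTheory.MonoidalCategory CategoryTheory.Functor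

universe v₁ v₂ v₃ u₁ u₂ u₃

/-- A `(C,D)`-biactegory: a category `M` with a left action of the monoidal category
`C`, a right action of the monoidal category `D`, and compatible coherence
isomorphisms. -/
structure Biactegory (C : Type u₁) (D : Type u₂) (M : Type u₃)
    [Category.{v₁} C] [Category.{v₂} D] [Category.{v₃} M]
    [MonoidalCategory C] [MonoidalCategory D] where
  actL : C ⥤ M ⥤ M
  actR : D ⥤ M ⥤ M
  assocL : ∀ V W : C, actL.obj (V ⊗ W) ≅ actL.obj W ⋙ actL.obj V
  assocR : ∀ X Y : D, actR.obj (X ⊗ Y) ≅ actR.obj X ⋙ actR.obj Y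
  middle : ∀ (V : C) (X : D), actL.obj V ⋙ actR.obj X ≅ actR.obj X ⋙ actL.obj V
  unitL : actL.obj (𝟙_ C) ≅ 𝟭 M
  unitR : actR.obj (𝟙_ D) ≅ 𝟭 M
  assocL_natural : ∀ {V V' W W' : C} (f : V ⟶ V') (g : W ⟶ W') (m : M),
    (actL.map (f ⊗ₘ g)).app m ≫ (assocL V' W').hom.app m
      = (assocL V W).hom.app m ≫ (actL.map f).app ((actL.obj W).obj m) ≫
        (actL.obj V').map ((actL.map g).app m)
  assocR_natural : ∀ {X X' Y Y' : D} (f : X ⟶ X') (g : Y ⟶ Y') (m : M),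
    (actR.map (f ⊗ₘ g)).app m ≫ (assocR X' Y').hom.app m
      = (assocR X Y).hom.app m ≫ (actR.obj Y).map ((actR.map f).app m) ≫
        (actR.map g).app ((actR.obj X').obj m)
  middle_natural : ∀ {V V' : C} {X X' : D} (f : V ⟶ V') (g : X ⟶ X') (m : M),
    (actR.map g).app ((actL.obj V).obj m) ≫ (actR.obj X').map ((actL.map f).app m) ≫
        (middle V' X').hom.app m
      = (middle V X).hom.app m ≫ (actL.map f).app ((actR.obj X).obj m) ≫
        (actL.obj V').map ((actR.map g).app m)
  pentagonL : ∀ (U V W : C) (m : M),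
    (actL.map (α_ U V W).hom).app m ≫ (assocL U (V ⊗ W)).hom.app m ≫
        (actL.obj U).map ((assocL V W).hom.app m)
      = (assocL (U ⊗ V) W).hom.app m ≫ (assocL U V).hom.app ((actL.obj W).obj m)
  pentagonR : ∀ (X Y Z : D) (m : M),
    (actR.map (α_ X Y Z).hom).app m ≫ (assocR X (Y ⊗ Z)).hom.app m ≫
        (assocR Y Z).hom.app ((actR.obj X).obj m)
      = (assocR (X ⊗ Y) Z).hom.app m ≫ (actR.obj Z).map ((assocR X Y).hom.app m)
  middle_pentagonL : ∀ (V W : C) (X : D) (m : M),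
    (actR.obj X).map ((assocL V W).hom.app m) ≫ (middle V X).hom.app ((actL.obj W).obj m) ≫
        (actL.obj V).map ((middle W X).hom.app m)
      = (middle (V ⊗ W) X).hom.app m ≫ (assocL V W).hom.app ((actR.obj X).obj m)
  middle_pentagonR : ∀ (V : C) (X Y : D) (m : M),
    (assocR X Y).hom.app ((actL.obj V).obj m) ≫ (actR.obj Y).map ((middle V X).hom.app m) ≫
        (middle V Y).hom.app ((actR.obj X).obj m)
      = (middle V (X ⊗ Y)).hom.app m ≫ (actL.obj V).map ((assocR X Y).hom.app m)
  triangleL : ∀ (V : C) (m : M),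
    (actL.map (λ_ V).hom).app m
      = (assocL (𝟙_ C) V).hom.app m ≫ unitL.hom.app ((actL.obj V).obj m)
  triangleR : ∀ (X : D) (m : M),
    (actR.map (ρ_ X).hom).app m
      = (assocR X (𝟙_ D)).hom.app m ≫ unitR.hom.app ((actR.obj X).obj m)

variable {C : Type u₁} {D : Type u₂} {M : Type u₃}
  [Category.{v₁} C] [Category.{v₂} D] [Category.{v₃} M]
  [MonoidalCategory C] [MonoidalCategory D]

/-- The lax half-braid heptagon condition for a family
`β_V : V ▷ m₀ ⟶ m₀ ◁ E(V)` in the lax `E`-center of a biactegory. -/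
def IsHalfBraid (B : Biactegory C D M) (E : C ⥤ D) [E.OplaxMonoidal] (m₀ : M)
    (β : ∀ V : C, (B.actL.obj V).obj m₀ ⟶ (B.actR.obj (E.obj V)).obj m₀) : Prop :=
  (∀ {V W : C} (f : V ⟶ W),
      (B.actL.map f).app m₀ ≫ β W = β V ≫ (B.actR.map (E.map f)).app m₀) ∧
  (∀ V W : C,
    β (V ⊗ W) ≫ (B.actR.map (OplaxMonoidal.δ E V W)).app m₀ ≫
        (B.assocR (E.obj V) (E.obj W)).hom.app m₀
      = (B.assocL V W).hom.app m₀ ≫ (B.actL.obj V).map (β W) ≫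
        (B.middle V (E.obj W)).inv.app m₀ ≫ (B.actR.obj (E.obj W)).map (β V))

/-- The lax half-braiding (hexagon) condition for an object `(X₀, τ)` of the lax
center `Z^w(D)`: `τ_Y : Y ⊗ X₀ ⟶ X₀ ⊗ Y` natural with
`τ_{Y⊗Z} = (τ_Y ⊗ id) ∘ (id ⊗ τ_Z)` up to associators. -/
def IsLaxCenter (X₀ : D) (τ : ∀ Y : D, Y ⊗ X₀ ⟶ X₀ ⊗ Y) : Prop :=
  (∀ {Y Z : D} (f : Y ⟶ Z), (f ▷ X₀) ≫ τ Z = τ Y ≫ (X₀ ◁ f)) ∧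
  (∀ Y Z : D,
    τ (Y ⊗ Z) = (α_ Y Z X₀).hom ≫ (Y ◁ τ Z) ≫ (α_ Y X₀ Z).inv ≫
      (τ Y ▷ Z) ≫ (α_ X₀ Y Z).hom)

/-- The induced half-braid on `m₀ ◁ X₀`:
`β^{M◁X}_V = (id_{m₀} ◁ τ_{E V}) ∘ (β_V ◁ id_{X₀})`, with coherences inserted. -/
def inducedHalfBraid (B : Biactegory C D M) (E : C ⥤ D) [E.OplaxMonoidal] (m₀ : M)
    (β : ∀ V : C, (B.actL.obj V).obj m₀ ⟶ (B.actR.obj (E.obj V)).obj m₀)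
    (X₀ : D) (τ : ∀ Y : D, Y ⊗ X₀ ⟶ X₀ ⊗ Y) (V : C) :
    (B.actL.obj V).obj ((B.actR.obj X₀).obj m₀) ⟶
      (B.actR.obj (E.obj V)).obj ((B.actR.obj X₀).obj m₀) :=
  (B.middle V X₀).inv.app m₀ ≫ (B.actR.obj X₀).map (β V) ≫
    (B.assocR (E.obj V) X₀).inv.app m₀ ≫ (B.actR.map (τ (E.obj V))).app m₀ ≫
    (B.assocR X₀ (E.obj V)).hom.app m₀


section Helpers

variable (B : Biactegory C D M)

lemma assocR_natural_left {X X' : D} (f : X ⟶ X') (Y : D) (m : M) :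
    (B.actR.map (f ▷ Y)).app m ≫ (B.assocR X' Y).hom.app m
      = (B.assocR X Y).hom.app m ≫ (B.actR.obj Y).map ((B.actR.map f).app m) := by
  simpa using B.assocR_natural f (𝟙 Y) m

lemma assocR_natural_right (X : D) {Y Y' : D} (g : Y ⟶ Y') (m : M) :
    (B.actR.map (X ◁ g)).app m ≫ (B.assocR X Y').hom.app m
      = (B.assocR X Y).hom.app m ≫ (B.actR.map g).app ((B.actR.obj X).obj m) := by
  simpa using B.assocR_natural (𝟙 X) g m

lemma middle_natural_left {V V' : C} (f : V ⟶ V') (X : D) (m : M) :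
    (B.actR.obj X).map ((B.actL.map f).app m) ≫ (B.middle V' X).hom.app m
      = (B.middle V X).hom.app m ≫ (B.actL.map f).app ((B.actR.obj X).obj m) := by
  simpa using B.middle_natural f (𝟙 X) m

lemma middle_natural_right (V : C) {X X' : D} (g : X ⟶ X') (m : M) :
    (B.actR.map g).app ((B.actL.obj V).obj m) ≫ (B.middle V X').hom.app m
      = (B.middle V X).hom.app m ≫ (B.actL.obj V).map ((B.actR.map g).app m) := by
  simpa using B.middle_natural (𝟙 V) g m

lemma middle_inv_natural_right (V : C) {X X' : D} (g : X ⟶ X') (m : M) :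
    (B.actL.obj V).map ((B.actR.map g).app m) ≫ (B.middle V X').inv.app m
      = (B.middle V X).inv.app m ≫ (B.actR.map g).app ((B.actL.obj V).obj m) := by
  rw [← cancel_mono ((B.middle V X').hom.app m)]
  simp only [Category.assoc, Iso.inv_hom_id_app, Functor.comp_obj, Category.comp_id,
    middle_natural_right B V g m, Iso.inv_hom_id_app_assoc]

lemma middle_inv_natural_left {V V' : C} (f : V ⟶ V') (X : D) (m : M) :
    (B.actL.map f).app ((B.actR.obj X).obj m) ≫ (B.middle V' X).inv.app m
      = (B.middle V X).inv.app m ≫ (B.actR.obj X).map ((B.actL.map f).app m) := by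
  rw [← cancel_mono ((B.middle V' X).hom.app m)]
  simp only [Category.assoc, Iso.inv_hom_id_app, Functor.comp_obj, Category.comp_id,
    middle_natural_left B f X m, Iso.inv_hom_id_app_assoc]

lemma assocR_inv_natural_left {X X' : D} (f : X ⟶ X') (Y : D) (m : M) :
    (B.actR.obj Y).map ((B.actR.map f).app m) ≫ (B.assocR X' Y).inv.app m
      = (B.assocR X Y).inv.app m ≫ (B.actR.map (f ▷ Y)).app m := by
  rw [← cancel_mono ((B.assocR X' Y).hom.app m)]
  simp only [Category.assoc, Iso.inv_hom_id_app, Functor.comp_obj, Category.comp_id,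
    assocR_natural_left B f Y m, Iso.inv_hom_id_app_assoc]

lemma middle_inv_app_natural (V : C) (X : D) {m m' : M} (h : m ⟶ m') :
    (B.actL.obj V).map ((B.actR.obj X).map h) ≫ (B.middle V X).inv.app m'
      = (B.middle V X).inv.app m ≫ (B.actR.obj X).map ((B.actL.obj V).map h) := by
  simpa using (B.middle V X).inv.naturality h

lemma pentagonR' (X Y Z : D) (m : M) :
    (B.actR.map (α_ X Y Z).hom).app m ≫ (B.assocR X (Y ⊗ Z)).hom.app m
      = (B.assocR (X ⊗ Y) Z).hom.app m ≫ (B.actR.obj Z).map ((B.assocR X Y).hom.app m) ≫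
        (B.assocR Y Z).inv.app ((B.actR.obj X).obj m) := by
  rw [← cancel_mono ((B.assocR Y Z).hom.app ((B.actR.obj X).obj m))]
  simp only [Category.assoc, Iso.inv_hom_id_app, Functor.comp_obj, Category.comp_id]
  exact B.pentagonR X Y Z m

lemma pentagonR_inv (X Y Z : D) (m : M) :
    (B.actR.map (α_ X Y Z).inv).app m ≫ (B.assocR (X ⊗ Y) Z).hom.app m
      = (B.assocR X (Y ⊗ Z)).hom.app m ≫ (B.assocR Y Z).hom.app ((B.actR.obj X).obj m) ≫
        (B.actR.obj Z).map ((B.assocR X Y).inv.app m) := by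
  have hα : (B.actR.map (α_ X Y Z).inv).app m ≫ (B.actR.map (α_ X Y Z).hom).app m
      = 𝟙 ((B.actR.obj (X ⊗ Y ⊗ Z)).obj m) := by
    rw [← NatTrans.comp_app, ← Functor.map_comp, Iso.inv_hom_id]
    simp
  have c1 : (B.actR.obj Z).map ((B.assocR X Y).inv.app m) ≫
      (B.actR.obj Z).map ((B.assocR X Y).hom.app m)
      = 𝟙 ((B.actR.obj Z).obj ((B.actR.obj Y).obj ((B.actR.obj X).obj m))) := by
    rw [← Functor.map_comp, Iso.inv_hom_id_app]
    simp
  rw [← cancel_mono ((B.actR.obj Z).map ((B.assocR X Y).hom.app m))]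
  simp only [Category.assoc]
  rw [c1]
  simp only [Functor.comp_obj, Category.comp_id]
  rw [← B.pentagonR X Y Z m, reassoc_of% hα]

lemma hA (V : C) (X Y : D) (m : M) :
    (B.actL.obj V).map ((B.assocR X Y).hom.app m) ≫
        (B.middle V Y).inv.app ((B.actR.obj X).obj m)
      = (B.middle V (X ⊗ Y)).inv.app m ≫ (B.assocR X Y).hom.app ((B.actL.obj V).obj m) ≫
        (B.actR.obj Y).map ((B.middle V X).hom.app m) := by
  rw [← cancel_mono ((B.middle V Y).hom.app ((B.actR.obj X).obj m))]
  simp only [Category.assoc, Iso.inv_hom_id_app, Functor.comp_obj, Category.comp_id,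
    B.middle_pentagonR V X Y m, Iso.inv_hom_id_app_assoc]

lemma hC (V : C) (X Y : D) (m : M) :
    (B.actL.obj V).map ((B.assocR X Y).inv.app m) ≫ (B.middle V (X ⊗ Y)).inv.app m
      = (B.middle V Y).inv.app ((B.actR.obj X).obj m) ≫
        (B.actR.obj Y).map ((B.middle V X).inv.app m) ≫
        (B.assocR X Y).inv.app ((B.actL.obj V).obj m) := by
  have c1 : (B.actL.obj V).map ((B.assocR X Y).hom.app m) ≫
      (B.actL.obj V).map ((B.assocR X Y).inv.app m)
      = 𝟙 ((B.actL.obj V).obj ((B.actR.obj (X ⊗ Y)).obj m)) := by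
    rw [← Functor.map_comp, Iso.hom_inv_id_app]
    simp
  have c2 : (B.actR.obj Y).map ((B.middle V X).hom.app m) ≫
      (B.actR.obj Y).map ((B.middle V X).inv.app m)
      = 𝟙 ((B.actR.obj Y).obj ((B.actR.obj X).obj ((B.actL.obj V).obj m))) := by
    rw [← Functor.map_comp, Iso.hom_inv_id_app]
    simp
  rw [← cancel_epi ((B.actL.obj V).map ((B.assocR X Y).hom.app m))]
  rw [reassoc_of% (hA B V X Y m), reassoc_of% c1, reassoc_of% c2]
  simp

lemma hE (V W : C) (X : D) (m : M) :
    (B.assocL V W).hom.app ((B.actR.obj X).obj m) ≫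
        (B.actL.obj V).map ((B.middle W X).inv.app m) ≫
        (B.middle V X).inv.app ((B.actL.obj W).obj m)
      = (B.middle (V ⊗ W) X).inv.app m ≫ (B.actR.obj X).map ((B.assocL V W).hom.app m) := by
  have c1 : (B.actL.obj V).map ((B.middle W X).hom.app m) ≫
      (B.actL.obj V).map ((B.middle W X).inv.app m)
      = 𝟙 ((B.actL.obj V).obj ((B.actR.obj X).obj ((B.actL.obj W).obj m))) := by
    rw [← Functor.map_comp, Iso.hom_inv_id_app]
    simp
  rw [← cancel_epi ((B.middle (V ⊗ W) X).hom.app m)]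
  rw [← reassoc_of% (B.middle_pentagonL V W X m), reassoc_of% c1]
  simp

end Helpers

section AuxD

variable (B : Biactegory C D M)

lemma auxD (m₀ : M) (X₀ : D) (τ : ∀ Y : D, Y ⊗ X₀ ⟶ X₀ ⊗ Y)
    (hτ2 : ∀ Y Z : D,
      τ (Y ⊗ Z) = (α_ Y Z X₀).hom ≫ (Y ◁ τ Z) ≫ (α_ Y X₀ Z).inv ≫
        (τ Y ▷ Z) ≫ (α_ X₀ Y Z).hom) (Y Z : D) :
    (B.assocR (Y ⊗ Z) X₀).inv.app m₀ ≫ (B.actR.map (τ (Y ⊗ Z))).app m₀ ≫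
        (B.assocR X₀ (Y ⊗ Z)).hom.app m₀ ≫ (B.assocR Y Z).hom.app ((B.actR.obj X₀).obj m₀)
      = (B.actR.obj X₀).map ((B.assocR Y Z).hom.app m₀) ≫
        (B.assocR Z X₀).inv.app ((B.actR.obj Y).obj m₀) ≫
        (B.actR.map (τ Z)).app ((B.actR.obj Y).obj m₀) ≫
        (B.assocR X₀ Z).hom.app ((B.actR.obj Y).obj m₀) ≫
        (B.actR.obj Z).map ((B.assocR Y X₀).inv.app m₀ ≫ (B.actR.map (τ Y)).app m₀ ≫
          (B.assocR X₀ Y).hom.app m₀) := by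
  rw [hτ2 Y Z]
  simp only [Functor.map_comp, NatTrans.comp_app, Category.assoc]
  rw [B.pentagonR X₀ Y Z m₀]
  rw [reassoc_of% (assocR_natural_left B (τ Y) Z m₀)]
  rw [reassoc_of% (pentagonR_inv B Y X₀ Z m₀)]
  rw [reassoc_of% (assocR_natural_right B Y (τ Z) m₀)]
  rw [reassoc_of% (pentagonR' B Y Z X₀ m₀)]
  simp only [Iso.inv_hom_id_app_assoc, Functor.map_comp, Category.assoc]

end AuxD

/-- If `(m₀, β)` is an object of the lax `E`-center `Z^w_E(M)` of a
`(C,D)`-biactegory `M` and `(X₀, τ)` is an object of the lax center `Z^w(D)`, then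
`m₀ ◁ X₀`, equipped with `β^{M◁X}_V = (id ◁ τ_{E V}) ∘ (β_V ◁ id)`, is again an
object of `Z^w_E(M)`: the induced family is natural and satisfies the heptagon
half-braid condition. -/
theorem laxCenter_act_laxCenter (B : Biactegory C D M) (E : C ⥤ D) [E.OplaxMonoidal]
    (m₀ : M) (β : ∀ V : C, (B.actL.obj V).obj m₀ ⟶ (B.actR.obj (E.obj V)).obj m₀)
    (hβ : IsHalfBraid B E m₀ β)
    (X₀ : D) (τ : ∀ Y : D, Y ⊗ X₀ ⟶ X₀ ⊗ Y) (hτ : IsLaxCenter X₀ τ) :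
    IsHalfBraid B E ((B.actR.obj X₀).obj m₀) (inducedHalfBraid B E m₀ β X₀ τ) := by
  obtain ⟨hβ1, hβ2⟩ := hβ
  obtain ⟨hτ1, hτ2⟩ := hτ
  constructor
  · intro V W f
    simp only [inducedHalfBraid, Category.assoc]
    rw [reassoc_of% (middle_inv_natural_left B f X₀ m₀)]
    have hb : (B.actR.obj X₀).map ((B.actL.map f).app m₀) ≫ (B.actR.obj X₀).map (β W)
        = (B.actR.obj X₀).map (β V) ≫
          (B.actR.obj X₀).map ((B.actR.map (E.map f)).app m₀) := by
      rw [← Functor.map_comp, hβ1 f, Functor.map_comp]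
    rw [reassoc_of% hb]
    rw [reassoc_of% (assocR_inv_natural_left B (E.map f) X₀ m₀)]
    have ht : (B.actR.map (E.map f ▷ X₀)).app m₀ ≫ (B.actR.map (τ (E.obj W))).app m₀
        = (B.actR.map (τ (E.obj V))).app m₀ ≫
          (B.actR.map (X₀ ◁ E.map f)).app m₀ := by
      rw [← NatTrans.comp_app, ← Functor.map_comp, hτ1 (E.map f), Functor.map_comp,
        NatTrans.comp_app]
    rw [reassoc_of% ht]
    rw [assocR_natural_right B X₀ (E.map f) m₀]
  · intro V W
    simp only [inducedHalfBraid, Functor.map_comp, Category.assoc]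
    rw [← reassoc_of% (assocR_natural_right B X₀ (OplaxMonoidal.δ E V W) m₀)]
    have ht : (B.actR.map (τ (E.obj (V ⊗ W)))).app m₀ ≫
        (B.actR.map (X₀ ◁ OplaxMonoidal.δ E V W)).app m₀
        = (B.actR.map (OplaxMonoidal.δ E V W ▷ X₀)).app m₀ ≫
          (B.actR.map (τ (E.obj V ⊗ E.obj W))).app m₀ := by
      rw [← NatTrans.comp_app, ← Functor.map_comp, ← hτ1 (OplaxMonoidal.δ E V W),
        Functor.map_comp, NatTrans.comp_app]
    rw [reassoc_of% ht]
    rw [← reassoc_of% (assocR_inv_natural_left B (OplaxMonoidal.δ E V W) X₀ m₀)]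
    rw [auxD B m₀ X₀ τ hτ2 (E.obj V) (E.obj W)]
    simp only [Functor.map_comp, Category.assoc]
    rw [reassoc_of% (hA B V X₀ (E.obj W) m₀)]
    have hcan : (B.actR.obj (E.obj W)).map ((B.middle V X₀).hom.app m₀) ≫
        (B.actR.obj (E.obj W)).map ((B.middle V X₀).inv.app m₀)
        = 𝟙 ((B.actR.obj (E.obj W)).obj ((B.actR.obj X₀).obj ((B.actL.obj V).obj m₀))) := by
      rw [← Functor.map_comp, Iso.hom_inv_id_app]
      simp
    rw [reassoc_of% hcan]
    rw [reassoc_of% (middle_inv_natural_right B V (τ (E.obj W)) m₀)]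
    rw [reassoc_of% (hC B V (E.obj W) X₀ m₀)]
    rw [reassoc_of% (middle_inv_app_natural B V X₀ (β W))]
    rw [reassoc_of% (hE B V W X₀ m₀)]
    have n1 := (B.assocR X₀ (E.obj W)).hom.naturality (β V)
    have n2 := (B.actR.map (τ (E.obj W))).naturality (β V)
    have n3 := (B.assocR (E.obj W) X₀).inv.naturality (β V)
    simp only [Functor.comp_map] at n1 n3
    rw [← reassoc_of% n1, ← reassoc_of% n2, ← reassoc_of% n3]
    have hR := congrArg (B.actR.obj X₀).map (hβ2 V W)
    simp only [Functor.map_comp] at hR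
    rw [← reassoc_of% hR]
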